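/- Let d be a positive even integer, let σ = (σ₁,σ₂) ∈ ℤ², and set s = (σ₁, σ₂ + d/2). Let λ and μ be bipartitions, and let Λ and Λ' be the charged symbols of λ and μ with charge σ. If λ ⪯_s μ in the Dunkl–Griffeth order (defined with respect to d), then Λ ⊲ Λ' or Λ ≡ Λ' (i.e. ϖ_Λ = ϖ_{Λ'}, or ϖ_Λ ≠ ϖ_{Λ'} and all partial sums of ϖ_Λ are bounded by those of ϖ_{Λ'}). -/

import Mathlib

open scoped Classical

noncomputable section

/-- A partition: an antitone, eventually zero sequence of natural numbers.
`parts k` is the `(k+1)`-st part `λ_{k+1}`. -/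
structure NPartition where
  parts : ℕ → ℕ
  antitone' : Antitone parts
  exists_zero : ∃ N, parts N = 0

namespace NPartition

lemma sorted_getD_antitone {l : List ℕ} (h : l.Pairwise (· ≥ ·)) :
    Antitone (fun k => l.getD k 0) := by
  intro i j hij
  simp only
  rcases lt_or_ge j l.length with hj | hj
  · have hi : i < l.length := lt_of_le_of_lt hij hj
    rw [List.getD_eq_getElem l 0 hj, List.getD_eq_getElem l 0 hi]
    rcases eq_or_lt_of_le hij with rfl | hlt
    · exact le_rfl
    · exact List.pairwise_iff_getElem.mp h i j hi hj hlt
  · rw [List.getD_eq_default l 0 hj]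
    exact Nat.zero_le _

/-- The partition whose multiset of (nonzero) parts is the multiset of nonzero
elements of `m`. -/
def ofMul (m : Multiset ℕ) : NPartition where
  parts := fun k => ((m.sort (· ≤ ·)).reverse).getD k 0
  antitone' := by
    apply sorted_getD_antitone
    rw [List.pairwise_reverse]
    exact Multiset.pairwise_sort (r := (· ≤ ·)) (s := m)
  exists_zero := ⟨((m.sort (· ≤ ·)).reverse).length, List.getD_eq_default _ _ le_rfl⟩

/-- The size `|λ|` of a partition: the sum of its parts. -/
def size (p : NPartition) : ℕ := ∑ i ∈ Finset.range (Nat.find p.exists_zero), p.parts i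

lemma finite_gt (p : NPartition) (k : ℕ) : {i : ℕ | k < p.parts i}.Finite := by
  obtain ⟨N, hN⟩ := p.exists_zero
  apply (Set.finite_Iio N).subset
  intro i hi
  simp only [Set.mem_setOf_eq] at hi
  by_contra hc
  simp only [Set.mem_Iio, not_lt] at hc
  have := p.antitone' hc
  omega

/-- The conjugate (transpose) partition. -/
def conj (p : NPartition) : NPartition where
  parts := fun k => {i : ℕ | k < p.parts i}.ncard
  antitone' := fun a b hab =>
    Set.ncard_le_ncard (fun i hi => lt_of_le_of_lt hab hi) (p.finite_gt a)
  exists_zero := by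
    refine ⟨p.parts 0, ?_⟩
    have h : {i : ℕ | p.parts 0 < p.parts i} = ∅ := by
      ext i
      simp only [Set.mem_setOf_eq, Set.mem_empty_iff_false, iff_false, not_lt]
      exact p.antitone' (Nat.zero_le i)
    try simp only []
    rw [h, Set.ncard_empty]

/-- The 180°-rotation of the complement of `p` inside the rectangle with
`rows` rows of length `c`: the partition `(c - p_rows, c - p_{rows-1}, …, c - p₁)`. -/
def rotCompl (c rows : ℕ) (p : NPartition) : NPartition where
  parts := fun k => if k < rows then c - p.parts (rows - 1 - k) else 0
  antitone' := by
    intro a b hab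
    by_cases hb : b < rows
    · have ha : a < rows := lt_of_le_of_lt hab hb
      simp only [if_pos hb, if_pos ha]
      exact Nat.sub_le_sub_left (p.antitone' (by omega)) c
    · simp only [if_neg hb]
      exact Nat.zero_le _
  exists_zero := ⟨rows, by simp⟩

end NPartition

/-- A bipartition: a pair of partitions. -/
abbrev Bipartition := NPartition × NPartition

/-- The size of a bipartition. -/
def Bipartition.size (l : Bipartition) : ℕ := l.1.size + l.2.size

/-- The bipartition whose components have parts the multisets `a` and `b`. -/
def bip (a b : Multiset ℕ) : Bipartition := (NPartition.ofMul a, NPartition.ofMul b)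

/-- The multiset of parts of the partition `a 1^b` (one part `a`, then `b` parts `1`). -/
def hook (a b : ℕ) : Multiset ℕ := a ::ₘ Multiset.replicate b 1

/-- The charged β-set of a partition, as a sequence:
`betaSet p s i = λ_{i+1} + s - (i+1) + 1`. -/
def betaSet (p : NPartition) (s : ℤ) (i : ℕ) : ℤ := (p.parts i : ℤ) + s - i

/-- The charged symbol of a bipartition with charge `σ`, as a pair of subsets of `ℤ`. -/
def symbolOf (l : Bipartition) (σ : ℤ × ℤ) : Set ℤ × Set ℤ :=
  (Set.range (betaSet l.1 σ.1), Set.range (betaSet l.2 σ.2))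

/-- The charge `σ_t`. -/
def sigmaT (t : ℕ) : ℤ × ℤ :=
  if Even t then ((t : ℤ), -1 - (t : ℤ)) else (-1 - (t : ℤ), (t : ℤ))

/-- The trivial symbol `({0,-1,-2,…},{-1,-2,-3,…})`, the symbol of the empty
bipartition with charge `σ₀ = (0,-1)`. -/
def trivialSymbol : Set ℤ × Set ℤ := ({z : ℤ | z ≤ 0}, {z : ℤ | z ≤ -1})

/-- Removing one `n`-co-hook from the symbol `Λ`, yielding `Λ'`: remove `x+n` from one
row, adjoin `x` to the other row, and exchange the two rows. -/
def CohookStep (n : ℕ) (Λ Λ' : Set ℤ × Set ℤ) : Prop :=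
  (∃ x : ℤ, x + n ∈ Λ.1 ∧ x ∉ Λ.2 ∧ Λ' = (Λ.2 ∪ {x}, Λ.1 \ {x + n})) ∨
  (∃ x : ℤ, x + n ∈ Λ.2 ∧ x ∉ Λ.1 ∧ Λ' = (Λ.2 \ {x + n}, Λ.1 ∪ {x}))

/-- `C` is the `n`-co-core of `Λ`: it is obtained from `Λ` by recursively removing
`n`-co-hooks, and no further `n`-co-hook can be removed. -/
def IsCocore (n : ℕ) (Λ C : Set ℤ × Set ℤ) : Prop :=
  Relation.ReflTransGen (CohookStep n) Λ C ∧ ∀ C', ¬ CohookStep n C C'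

/-- Number of entries of the charged β-set of `p` that are `≥ α` (with multiplicity). -/
def betaCountGE (p : NPartition) (s α : ℤ) : ℕ := Nat.card {i : ℕ // α ≤ betaSet p s i}

/-- Number of entries `≥ α`, with multiplicity, of the multiset union of the two rows
of the symbol of `l` with charge `σ`. -/
def symCountGE (l : Bipartition) (σ : ℤ × ℤ) (α : ℤ) : ℕ :=
  betaCountGE l.1 σ.1 α + betaCountGE l.2 σ.2 α

/-- The composition `ϖ_Λ` of the symbol of `l` with charge `σ`: `comp l σ k` is the
`(k+1)`-st largest entry (with multiplicity) of the multiset union of the two rows. -/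
def comp (l : Bipartition) (σ : ℤ × ℤ) (k : ℕ) : ℤ :=
  sSup {z : ℤ | k + 1 ≤ symCountGE l σ z}

/-- All partial sums of the composition of the symbol `(l,σ)` are bounded by those of
`(m,τ)`. -/
def DomLE (l : Bipartition) (σ : ℤ × ℤ) (m : Bipartition) (τ : ℤ × ℤ) : Prop :=
  ∀ j : ℕ, ∑ k ∈ Finset.range j, comp l σ k ≤ ∑ k ∈ Finset.range j, comp m τ k

/-- Strict dominance `Λ ⊲ Λ'` of symbols: the compositions differ and all partial sums
of the first are bounded by those of the second. -/
def DomLT (l : Bipartition) (σ : ℤ × ℤ) (m : Bipartition) (τ : ℤ × ℤ) : Prop :=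
  comp l σ ≠ comp m τ ∧ DomLE l σ m τ

/-- A box `(x, y, j)` (0-indexed row `x`, 0-indexed column `y`, component `j`:
`j = 0` is the first component, `j = 1` the second). -/
abbrev Box := ℕ × ℕ × Fin 2

/-- The component of a bipartition selected by `j : Fin 2`. -/
def Bipartition.partsOf (l : Bipartition) (j : Fin 2) : NPartition := if j = 0 then l.1 else l.2

/-- Membership of a box in the Young diagram of a bipartition. -/
def MemY (l : Bipartition) (b : Box) : Prop := b.2.1 < (l.partsOf b.2.2).parts b.1

/-- The entry of the charge `σ` corresponding to component `j`. -/
def chargeOf (σ : ℤ × ℤ) (j : Fin 2) : ℤ := if j = 0 then σ.1 else σ.2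

/-- The charged content `co^σ(b) = y - x + σ_j` of a box. -/
def content (σ : ℤ × ℤ) (b : Box) : ℤ := (b.2.1 : ℤ) - (b.1 : ℤ) + chargeOf σ b.2.2

/-- `j(b) ∈ {1,2}`: the component of a box, numbered 1 or 2. -/
def jval (b : Box) : ℕ := (b.2.2 : ℕ) + 1

/-- The counting function of the Dunkl–Griffeth order. -/
def dgCount (l : Bipartition) (s : ℤ × ℤ) (d : ℕ) (α : ℝ) (j : ℕ) : ℕ :=
  Nat.card {b : Box // MemY l b ∧
    (α < (content s b : ℝ) - (jval b : ℝ) * (d : ℝ) / 2 ∨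
      ((content s b : ℝ) - (jval b : ℝ) * (d : ℝ) / 2 = α ∧ jval b ≤ j))}

/-- The Dunkl–Griffeth order `λ ⪯_s μ` (with respect to `d`). -/
def DGLE (l m : Bipartition) (s : ℤ × ℤ) (d : ℕ) : Prop :=
  ∀ (α : ℝ), ∀ j ∈ ({1, 2} : Set ℕ), dgCount l s d α j ≤ dgCount m s d α j

/-- A box of the extended Young diagram: rows are infinite to the left, so the column
coordinate is an integer.  `(x, y, j)` is the box in (0-indexed) row `x`, with integer
column coordinate `y` (`y = 0` is the first column), in component `j`. -/
abbrev ExtBox := ℕ × ℤ × Fin 2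

/-- Membership in the extended Young diagram of a bipartition. -/
def MemExtY (l : Bipartition) (b : ExtBox) : Prop :=
  b.2.1 < ((l.partsOf b.2.2).parts b.1 : ℤ)

/-- The charged content of an extended box. -/
def contentExt (σ : ℤ × ℤ) (b : ExtBox) : ℤ := b.2.1 - (b.1 : ℤ) + chargeOf σ b.2.2

/-- `b` is a removable box of the bipartition `l`. -/
def Removable (l : Bipartition) (b : Box) : Prop :=
  (l.partsOf b.2.2).parts b.1 = b.2.1 + 1 ∧ (l.partsOf b.2.2).parts (b.1 + 1) ≤ b.2.1

/-- `b` is an addable box of the bipartition `l`. -/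
def Addable (l : Bipartition) (b : Box) : Prop :=
  (l.partsOf b.2.2).parts b.1 = b.2.1 ∧
    (b.1 = 0 ∨ b.2.1 + 1 ≤ (l.partsOf b.2.2).parts (b.1 - 1))

/-- The order in which boxes are listed in the `i`-word: increasing charged content,
a component-2 box preceding a component-1 box of equal charged content. -/
def BoxLT (σ : ℤ × ℤ) (b b' : Box) : Prop :=
  content σ b < content σ b' ∨
    (content σ b = content σ b' ∧ b.2.2 = 1 ∧ b'.2.2 = 0)

/-- `L` is the list of boxes underlying the `i`-word of `(l, σ)` with respect to `d`:
it lists, in increasing order, exactly the addable and removable boxes of `l` whose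
charged content is congruent to `i` modulo `d`. -/
def IsIWord (l : Bipartition) (σ : ℤ × ℤ) (d : ℕ) (i : ZMod d) (L : List Box) : Prop :=
  L.Pairwise (BoxLT σ) ∧
    ∀ b : Box, b ∈ L ↔ ((Addable l b ∨ Removable l b) ∧ ((content σ b : ZMod d) = i))

/-- The sign of a box in the `i`-word: `true` (`+`) for addable, `false` (`−`) for
removable boxes. -/
def signOf (l : Bipartition) (b : Box) : Bool := if Addable l b then true else false

/-- One reduction step on words: delete an adjacent pair `−+`. -/
def RedStep (w w' : List Bool) : Prop :=
  ∃ u v : List Bool, w = u ++ false :: true :: v ∧ w' = u ++ v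

/-- `ẽ_i l = 0`: the reduced `i`-word of `(l, σ)` contains no `−`, i.e. the `i`-word
reduces to a word consisting only of `+`'s. -/
def AnnihilatedE (l : Bipartition) (σ : ℤ × ℤ) (d : ℕ) (i : ZMod d) : Prop :=
  ∃ L : List Box, IsIWord l σ d i L ∧
    ∃ a : ℕ, Relation.ReflTransGen RedStep (L.map (signOf l)) (List.replicate a true)

/-- `q` is obtained from the partition `p` by adding one box. -/
def PCovers (p q : NPartition) : Prop :=
  ∃ x : ℕ, q.parts x = p.parts x + 1 ∧ ∀ y : ℕ, y ≠ x → q.parts y = p.parts y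

/-- `m` is obtained from the bipartition `l` by adding one box to its Young diagram. -/
def BipCovers (l m : Bipartition) : Prop :=
  (PCovers l.1 m.1 ∧ m.2 = l.2) ∨ (m.1 = l.1 ∧ PCovers l.2 m.2)

/-- `A(l) = Σ_μ μ`, the sum over all bipartitions obtained from `l` by adding one box,
as an element of the group of `ℤ`-valued functions on bipartitions. -/
def addB (l : Bipartition) : Bipartition → ℤ := fun m => if BipCovers l m then 1 else 0

/-- The projection `π_S` onto the span of the bipartitions lying in `S`. -/
def projS (S : Set Bipartition) (f : Bipartition → ℤ) : Bipartition → ℤ :=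
  fun m => if m ∈ S then f m else 0

/-- The basis element of `ℤ[BP]` corresponding to a bipartition. -/
def deltaB (l : Bipartition) : Bipartition → ℤ := fun m => if m = l then 1 else 0

/-- The bipartitions of `2n` labelling the principal-series unipotent characters in
the principal `Φ_{2n}`-block. -/
def PS (n : ℕ) : Set Bipartition :=
  {l | (∃ i j : ℕ, 0 < i ∧ i < n ∧ j ≤ n ∧
          l = bip (hook (n - i) j) (hook (n - j + 1) (i - 1))) ∨
       (∃ j : ℕ, j < 2 * n ∧ l = bip (hook (2 * n - j) j) 0) ∨
       (∃ i : ℕ, 0 < i ∧ i ≤ 2 * n ∧ l = bip 0 (hook (2 * n - i + 1) (i - 1)))}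

/-- The bipartitions of `2n-2` labelling the `B₂`-series unipotent characters in the
principal `Φ_{2n}`-block: `2^i 1^{j-i-1} . (n-i-1)(n-j)` for `0 ≤ i < j ≤ n`. -/
def LB2 (n : ℕ) : Set Bipartition :=
  {l | ∃ i j : ℕ, i < j ∧ j ≤ n ∧
        l = bip (Multiset.replicate i 2 + Multiset.replicate (j - i - 1) 1)
                {n - i - 1, n - j}}

/-- The bipartitions of `2n-6` labelling the `B₆`-series unipotent characters in the
principal `Φ_{2n}`-block: `(n-i-2)(n-j-1) . 2^{i-1} 1^{j-i-1}` for `0 < i < j < n`. -/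
def LB6 (n : ℕ) : Set Bipartition :=
  {l | ∃ i j : ℕ, 0 < i ∧ i < j ∧ j < n ∧
        l = bip {n - i - 2, n - j - 1}
                (Multiset.replicate (i - 1) 2 + Multiset.replicate (j - i - 1) 1)}

end

/-!
Take `α = t - d/2 - 1/2` and `j = 1` in the Dunkl–Griffeth order for an integer `t`.
Since `s₂ - d = σ₂ - d/2`, both components are shifted by the same `-d/2`, so the
condition says that `λ` has at most as many boxes of `σ`-content `≥ t` as `μ`.

Row `x` of a charged β-set contributes
`(β_x - t)⁺ = #{boxes of row x of content ≥ t} + (σ_j - x - t)⁺`,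
and the last term does not depend on the partition. Summing (a layer-cake argument
relates the entries of the two rows to the composition `ϖ`), `∑ₖ (ϖₖ - t)⁺` is the number
of boxes of content `≥ t` plus a constant. With `t = ϖ'_K` this gives
`∑_{k ≤ K} ϖₖ ≤ K t + ∑ₖ (ϖₖ - t)⁺ ≤ K t + ∑ₖ (ϖ'ₖ - t)⁺ = ∑_{k ≤ K} ϖ'ₖ`.
-/

open Finset

namespace NPartition

lemma parts_le_parts_zero (p : NPartition) (i : ℕ) : p.parts i ≤ p.parts 0 :=
  p.antitone' (Nat.zero_le i)

end NPartition

section BetaSet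

variable (p : NPartition) (c : ℤ)

lemma betaSet_add_le (i : ℕ) : betaSet p c i + i ≤ betaSet p c 0 := by
  have := p.parts_le_parts_zero i
  simp only [betaSet]
  omega

lemma betaCountGE_eq_card_filter {u : ℤ} {X : ℕ} (hX : betaSet p c 0 < u + X) :
    betaCountGE p c u = #{x ∈ range X | u ≤ betaSet p c x} := by
  rw [betaCountGE, ← Nat.card_eq_finsetCard]
  congr! with x
  simp only [mem_filter, mem_range, iff_and_self]
  have := betaSet_add_le p c x
  omega

lemma betaCountGE_antitone : Antitone (betaCountGE p c) := by
  intro u v huv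
  obtain ⟨X, hX⟩ : ∃ X : ℕ, betaSet p c 0 < u + X :=
    ⟨(betaSet p c 0 - u + 1).toNat, by omega⟩
  rw [betaCountGE_eq_card_filter p c hX, betaCountGE_eq_card_filter p c (by omega : _ < v + X)]
  exact card_le_card (monotone_filter_right _ fun x _ h => huv.trans h)

lemma betaCountGE_eq_zero {u : ℤ} (hu : betaSet p c 0 < u) : betaCountGE p c u = 0 := by
  rw [betaCountGE_eq_card_filter p c (X := 0) (by omega), range_zero, filter_empty, card_empty]

lemma le_betaCountGE_sub (k : ℕ) : k + 1 ≤ betaCountGE p c (c - k) := by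
  obtain ⟨X, hX⟩ : ∃ X : ℕ, betaSet p c 0 < c - k + X :=
    ⟨(betaSet p c 0 - c + k + 1).toNat, by omega⟩
  rw [betaCountGE_eq_card_filter p c hX]
  calc k + 1 = #(range (k + 1)) := (card_range _).symm
    _ ≤ _ := card_le_card fun x hx => by
      rw [mem_range] at hx
      rw [mem_filter, mem_range]
      simp only [betaSet] at hX ⊢
      omega

end BetaSet

lemma sum_toNat_sub_eq_sum_card_filter {ι : Type*} (A : Finset ι) (f : ι → ℤ) {t U : ℤ}
    (hU : ∀ i ∈ A, f i ≤ U) :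
    ∑ i ∈ A, (f i - t).toNat = ∑ u ∈ Ioc t U, #{i ∈ A | u ≤ f i} := by
  have hlayer : ∀ i ∈ A, (f i - t).toNat = #{u ∈ Ioc t U | u ≤ f i} := fun i hi => by
    rw [← Int.card_Ioc]
    congr 1
    ext u
    simp only [mem_Ioc, mem_filter]
    have := hU i hi
    omega
  rw [sum_congr rfl hlayer]
  simp only [card_filter]
  exact sum_comm

section Composition

variable (l : Bipartition) (σ : ℤ × ℤ)

lemma symCountGE_eq_sum (u : ℤ) :
    symCountGE l σ u = ∑ j : Fin 2, betaCountGE (l.partsOf j) (chargeOf σ j) u := by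
  simp [symCountGE, Fin.sum_univ_two, Bipartition.partsOf, chargeOf]

lemma symCountGE_antitone : Antitone (symCountGE l σ) := fun _ _ h =>
  add_le_add (betaCountGE_antitone _ _ h) (betaCountGE_antitone _ _ h)

lemma symCountGE_eq_zero {u : ℤ} (hu : ∀ j, betaSet (l.partsOf j) (chargeOf σ j) 0 < u) :
    symCountGE l σ u = 0 := by
  simp [symCountGE_eq_sum, betaCountGE_eq_zero _ _ (hu _)]

lemma le_comp_iff (k : ℕ) (z : ℤ) : z ≤ comp l σ k ↔ k + 1 ≤ symCountGE l σ z := by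
  have hne : {z | k + 1 ≤ symCountGE l σ z}.Nonempty :=
    ⟨σ.1 - k, (le_betaCountGE_sub l.1 σ.1 k).trans (Nat.le_add_right _ _)⟩
  have hbdd : BddAbove {z | k + 1 ≤ symCountGE l σ z} := by
    obtain ⟨U, hU⟩ := Finite.exists_le fun j => betaSet (l.partsOf j) (chargeOf σ j) 0
    refine ⟨U, fun z hz => ?_⟩
    by_contra! h
    rw [Set.mem_setOf_eq, symCountGE_eq_zero l σ fun j => (hU j).trans_lt h] at hz
    omega
  exact ⟨fun hz => (Int.csSup_mem hne hbdd).trans (symCountGE_antitone l σ hz),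
    fun hz => le_csSup hbdd hz⟩

lemma comp_antitone : Antitone (comp l σ) := fun j k hjk => by
  have := (le_comp_iff l σ k _).1 le_rfl
  exact (le_comp_iff l σ j _).2 (by omega)

lemma symCountGE_comp_add_one_le (k : ℕ) : symCountGE l σ (comp l σ k + 1) ≤ k := by
  by_contra! h
  have := (le_comp_iff l σ k _).2 h
  omega

lemma comp_le {U : ℤ} (hU : ∀ j, betaSet (l.partsOf j) (chargeOf σ j) 0 ≤ U) (k : ℕ) :
    comp l σ k ≤ U := by
  by_contra! h
  have := (le_comp_iff l σ k (U + 1)).1 h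
  rw [symCountGE_eq_zero l σ fun j => (hU j).trans_lt (lt_add_one U)] at this
  omega

lemma sum_range_toNat_comp_sub (K : ℕ) {t U : ℤ}
    (hU : ∀ j, betaSet (l.partsOf j) (chargeOf σ j) 0 ≤ U) :
    ∑ k ∈ range K, (comp l σ k - t).toNat = ∑ u ∈ Ioc t U, min K (symCountGE l σ u) := by
  rw [sum_toNat_sub_eq_sum_card_filter _ _ fun k _ => comp_le l σ hU k]
  refine sum_congr rfl fun u _ => ?_
  have : {k ∈ range K | u ≤ comp l σ k} = range (min K (symCountGE l σ u)) := by
    ext k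
    simp only [mem_filter, mem_range, le_comp_iff]
    omega
  rw [this, card_range]

end Composition

section Boxes

lemma toNat_betaSet_sub (p : NPartition) (c t : ℤ) (x : ℕ) :
    (betaSet p c x - t).toNat =
      #{y ∈ range (p.parts x) | t ≤ (y : ℕ) - (x : ℤ) + c} + (c - x - t).toNat := by
  have : {y ∈ range (p.parts x) | t ≤ (y : ℕ) - (x : ℤ) + c} =
      Ico (t + x - c).toNat (p.parts x) := by
    ext y
    simp only [mem_filter, mem_range, mem_Ico]
    omega
  rw [this, Nat.card_Ico, betaSet]
  omega

lemma sum_betaCountGE_Ioc (p : NPartition) (c : ℤ) {t : ℤ} {X : ℕ}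
    (hX : betaSet p c 0 ≤ t + X) :
    ∑ u ∈ Ioc t (t + X), betaCountGE p c u =
      ∑ x ∈ range X,
        (#{y ∈ range (p.parts x) | t ≤ (y : ℕ) - (x : ℤ) + c} + (c - x - t).toNat) := by
  calc ∑ u ∈ Ioc t (t + X), betaCountGE p c u
      = ∑ u ∈ Ioc t (t + X), #{x ∈ range X | u ≤ betaSet p c x} :=
        sum_congr rfl fun u hu =>
          betaCountGE_eq_card_filter p c (by rw [mem_Ioc] at hu; omega)
    _ = ∑ x ∈ range X, (betaSet p c x - t).toNat :=
        (sum_toNat_sub_eq_sum_card_filter _ _ fun x _ => by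
          have := betaSet_add_le p c x
          omega).symm
    _ = _ := sum_congr rfl fun x _ => toNat_betaSet_sub p c t x

variable (l : Bipartition) (σ : ℤ × ℤ)

lemma card_boxes_content_ge {t : ℤ} {X : ℕ}
    (hX : ∀ j, betaSet (l.partsOf j) (chargeOf σ j) 0 ≤ t + X) :
    Nat.card {b : Box // MemY l b ∧ t ≤ content σ b} =
      ∑ j : Fin 2, ∑ x ∈ range X,
        #{y ∈ range ((l.partsOf j).parts x) | t ≤ (y : ℕ) - (x : ℤ) + chargeOf σ j} := by
  set Y := l.1.parts 0 + l.2.parts 0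
  have hY : ∀ j x, (l.partsOf j).parts x ≤ Y := fun j x =>
    ((l.partsOf j).parts_le_parts_zero x).trans <| by
      fin_cases j <;> simp [Bipartition.partsOf, Y]
  calc Nat.card {b : Box // MemY l b ∧ t ≤ content σ b}
      = #{b ∈ range X ×ˢ range Y ×ˢ univ |
          b.2.1 < (l.partsOf b.2.2).parts b.1 ∧
            t ≤ (b.2.1 : ℤ) - b.1 + chargeOf σ b.2.2} := by
        rw [← Nat.card_eq_finsetCard]
        congr! with ⟨x, y, j⟩
        rw [mem_filter]
        simp only [mem_product, mem_range, mem_univ, and_true,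
          iff_and_self, MemY, content]
        rintro ⟨hy, ht⟩
        have := hX j
        have := hY j x
        have := (l.partsOf j).parts_le_parts_zero x
        simp only [betaSet] at *
        omega
    _ = ∑ x ∈ range X, ∑ y ∈ range Y, ∑ j : Fin 2,
          if y < (l.partsOf j).parts x ∧ t ≤ (y : ℤ) - x + chargeOf σ j then 1 else 0 := by
        simp only [card_filter, sum_product]
    _ = ∑ j : Fin 2, ∑ x ∈ range X, ∑ y ∈ range Y,
          if y < (l.partsOf j).parts x ∧ t ≤ (y : ℤ) - x + chargeOf σ j then 1 else 0 := by
        rw [sum_comm (s := univ)]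
        exact sum_congr rfl fun x _ => sum_comm
    _ = _ := by
        refine sum_congr rfl fun j _ => sum_congr rfl fun x _ => ?_
        rw [← card_filter]
        congr 1
        ext y
        simp only [mem_filter, mem_range]
        have := hY j x
        omega

end Boxes

section Dominance

variable (l : Bipartition) (σ : ℤ × ℤ)

lemma sum_symCountGE_Ioc {t : ℤ} {X : ℕ}
    (hX : ∀ j, betaSet (l.partsOf j) (chargeOf σ j) 0 ≤ t + X) :
    ∑ u ∈ Ioc t (t + X), symCountGE l σ u =
      Nat.card {b : Box // MemY l b ∧ t ≤ content σ b} +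
        ∑ j : Fin 2, ∑ x ∈ range X, (chargeOf σ j - x - t).toNat := by
  simp only [symCountGE_eq_sum, card_boxes_content_ge l σ hX]
  rw [sum_comm, ← sum_add_distrib]
  refine sum_congr rfl fun j _ => ?_
  rw [sum_betaCountGE_Ioc _ _ (hX j), sum_add_distrib]

lemma sum_range_toNat_comp_sub_le (K : ℕ) {t : ℤ} {X : ℕ}
    (hX : ∀ j, betaSet (l.partsOf j) (chargeOf σ j) 0 ≤ t + X) :
    ∑ k ∈ range K, (comp l σ k - t).toNat ≤
      Nat.card {b : Box // MemY l b ∧ t ≤ content σ b} +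
        ∑ j : Fin 2, ∑ x ∈ range X, (chargeOf σ j - x - t).toNat := by
  rw [sum_range_toNat_comp_sub l σ K hX, ← sum_symCountGE_Ioc l σ hX]
  exact sum_le_sum fun u _ => min_le_right _ _

lemma sum_range_toNat_comp_sub_eq {K : ℕ} {t : ℤ} (hK : symCountGE l σ (t + 1) ≤ K) {X : ℕ}
    (hX : ∀ j, betaSet (l.partsOf j) (chargeOf σ j) 0 ≤ t + X) :
    ∑ k ∈ range K, (comp l σ k - t).toNat =
      Nat.card {b : Box // MemY l b ∧ t ≤ content σ b} +
        ∑ j : Fin 2, ∑ x ∈ range X, (chargeOf σ j - x - t).toNat := by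
  rw [sum_range_toNat_comp_sub l σ K hX, ← sum_symCountGE_Ioc l σ hX]
  refine sum_congr rfl fun u hu => min_eq_right ?_
  rw [mem_Ioc] at hu
  exact (symCountGE_antitone l σ (by omega : t + 1 ≤ u)).trans hK

end Dominance

theorem domLE_of_card_content_ge_le {l m : Bipartition} {σ : ℤ × ℤ}
    (h : ∀ t : ℤ, Nat.card {b : Box // MemY l b ∧ t ≤ content σ b} ≤
      Nat.card {b : Box // MemY m b ∧ t ≤ content σ b}) :
    DomLE l σ m σ := by
  intro K
  set t := comp m σ (K - 1)
  obtain ⟨X, hX⟩ : ∃ X : ℕ, ∀ j, max (betaSet (l.partsOf j) (chargeOf σ j) 0)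
      (betaSet (m.partsOf j) (chargeOf σ j) 0) ≤ t + X := by
    obtain ⟨U, hU⟩ := Finite.exists_le fun j =>
      max (betaSet (l.partsOf j) (chargeOf σ j) 0) (betaSet (m.partsOf j) (chargeOf σ j) 0)
    exact ⟨(U - t).toNat, fun j => (hU j).trans (by omega)⟩
  have hexcess :
      ∑ k ∈ range K, (comp l σ k - t).toNat ≤ ∑ k ∈ range K, (comp m σ k - t).toNat :=
    calc _ ≤ _ := sum_range_toNat_comp_sub_le l σ K fun j => le_of_max_le_left (hX j)
      _ ≤ _ := Nat.add_le_add_right (h t) _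
      _ = _ := (sum_range_toNat_comp_sub_eq m σ
          ((symCountGE_comp_add_one_le m σ _).trans (Nat.sub_le K 1))
          fun j => le_of_max_le_right (hX j)).symm
  have hm : ∀ k ∈ range K, ((comp m σ k - t).toNat : ℤ) = comp m σ k - t := fun k hk =>
    Int.toNat_of_nonneg <| sub_nonneg.2 <| comp_antitone m σ <| by
      rw [mem_range] at hk
      omega
  calc ∑ k ∈ range K, comp l σ k = ∑ k ∈ range K, (comp l σ k - t) + K * t := by
        rw [sum_sub_distrib, sum_const, card_range, nsmul_eq_mul]
        ring
    _ ≤ ∑ k ∈ range K, ((comp l σ k - t).toNat : ℤ) + K * t := by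
        gcongr with k
        exact Int.self_le_toNat _
    _ ≤ ∑ k ∈ range K, ((comp m σ k - t).toNat : ℤ) + K * t := by
        exact_mod_cast Int.add_le_add_right (Nat.cast_le.2 hexcess) _
    _ = ∑ k ∈ range K, comp m σ k := by
        rw [sum_congr rfl hm, sum_sub_distrib, sum_const, card_range, nsmul_eq_mul]
        ring

lemma content_shift_sub_jval_mul {d : ℕ} (hd : Even d) (σ : ℤ × ℤ) (b : Box) :
    ((content (σ.1, σ.2 + (d : ℤ) / 2) b : ℤ) : ℝ) - jval b * d / 2 =
      content σ b - d / 2 := by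
  obtain ⟨e, rfl⟩ := hd
  have he : ((e + e : ℕ) : ℤ) / 2 = e := by omega
  obtain ⟨x, y, j⟩ := b
  fin_cases j <;> simp only [content, chargeOf, jval, he] <;> push_cast <;> ring

lemma intCast_sub_half_lt_iff (t z : ℤ) : (t : ℝ) - 1 / 2 < z ↔ t ≤ z := by
  constructor <;> intro h
  · have : ((t - 1 : ℤ) : ℝ) < z := by push_cast; linarith
    exact Int.sub_one_lt_iff.1 (Int.cast_lt.1 this)
  · have : (t : ℝ) ≤ z := Int.cast_le.2 h
    linarith

lemma intCast_ne_sub_half (t z : ℤ) : (z : ℝ) ≠ t - 1 / 2 := by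
  intro h
  have : ((2 * z : ℤ) : ℝ) = ((2 * t - 1 : ℤ) : ℝ) := by push_cast; linarith
  have := Int.cast_injective this
  omega

lemma dgCount_eq_card_content_ge {d : ℕ} (hd : Even d) (l : Bipartition) (σ : ℤ × ℤ)
    (t : ℤ) :
    dgCount l (σ.1, σ.2 + (d : ℤ) / 2) d (t - d / 2 - 1 / 2) 1 =
      Nat.card {b : Box // MemY l b ∧ t ≤ content σ b} := by
  unfold dgCount
  congr! 4 with b
  rw [content_shift_sub_jval_mul hd, ← intCast_sub_half_lt_iff]
  constructor
  · rintro (h | ⟨h, -⟩)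
    · linarith
    · exact absurd (by linarith) (intCast_ne_sub_half t (content σ b))
  · intro h
    exact Or.inl (by linarith)

theorem decomposition_numbers_stmt0_general (d : ℕ) (hde : Even d) (sg : ℤ × ℤ)
    (l m : Bipartition) (h : DGLE l m (sg.1, sg.2 + (d : ℤ) / 2) d) :
    DomLT l sg m sg ∨ comp l sg = comp m sg := by
  have hdom : DomLE l sg m sg := domLE_of_card_content_ge_le fun t => by
    simpa only [dgCount_eq_card_content_ge hde] using h (t - d / 2 - 1 / 2) 1 (Or.inl rfl)
  by_cases hc : comp l sg = comp m sg
  · exact Or.inr hc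
  · exact Or.inl ⟨hc, hdom⟩

/-- If `λ ⪯_s μ` in the Dunkl–Griffeth order, where `d` is a positive
even integer and `s = (σ₁, σ₂ + d/2)`, then for the charged symbols with charge `σ`
either `Λ ⊲ Λ'` or `Λ ≡ Λ'`. -/
theorem decomposition_numbers_stmt0 (d : ℕ) (hd : 0 < d) (hde : Even d) (sg : ℤ × ℤ)
    (l m : Bipartition) (h : DGLE l m (sg.1, sg.2 + (d : ℤ) / 2) d) :
    DomLT l sg m sg ∨ comp l sg = comp m sg :=
  decomposition_numbers_stmt0_general d hde sg l m h
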